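/- arXiv:1611.07809 — 5 statements merged into one kernel-verified Lean document; each statement's English description precedes it below -/
import Mathlib

section
/- For every a > 0 and every integer n ≥ 1, the operator (R_{a^c} + T_{a^c})ⁿ R_a is a compact operator on L²(π). -/
/-!
Since `R_{a^c} R_a = 0`, the operator `(R_{a^c} + T_{a^c})ⁿ R_a` equals
`(R_{a^c} + T_{a^c})ⁿ⁻¹ T_{a^c} R_a`, so it suffices that `T_{a^c} R_a` is compact.
Writing `t(x,y) dy = K(x,y) π(dy)` with the continuous kernel `K = t / π`, the function
`T_{a^c} R_a f` is the cut-off of `x ↦ ∫ K(x,y) g(y) π(dy)`, where `g = R_a f` vanishes off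
`[-a, a]`; by the finite range of `q` it also vanishes for `|x| > |a| + |s|`. As `f` runs over
the unit ball, `‖g‖_{L¹(π)} ≤ ‖g‖_{L²(π)}` stays bounded, and uniform continuity of `K` on
compacta makes these functions uniformly bounded and equicontinuous on `|x| ≤ |a| + |s|`.
Arzelà–Ascoli then yields a compact set of continuous functions whose image in `L²(π)`
contains `T_{a^c} R_a` of the unit ball.
-/

open MeasureTheory Filter Topology

noncomputable section

/-- The probability measure on `ℝ` with density `π` w.r.t. Lebesgue measure. -/
def piMeas (π : ℝ → ℝ) : Measure ℝ := volume.withDensity fun x => ENNReal.ofReal (π x)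

/-- `t(x,y) = min(q(x,y), π(y) q(y,x) / π(x))`. -/
def mhT (π : ℝ → ℝ) (q : ℝ → ℝ → ℝ) (x y : ℝ) : ℝ := min (q x y) (π y * q y x / π x)

/-- The rejection probability `r(x) = 1 - ∫ t(x,y) dy`. -/
def mhR (π : ℝ → ℝ) (q : ℝ → ℝ → ℝ) (x : ℝ) : ℝ := 1 - ∫ y, mhT π q x y

open Set Function
open scoped ENNReal NNReal BoundedContinuousFunction

section KernelIntegral

variable {α X : Type*} [MeasurableSpace α] {μ : Measure α} {L : Set α} {g : α → ℂ}

def kernelIntegral (μ : Measure α) (K : X → α → ℂ) (g : α → ℂ) (x : X) : ℂ :=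
  ∫ y, K x y * g y ∂μ

lemma ae_norm_mul_le_of_forall_mem {φ : α → ℂ} {C : ℝ} (hgL : ∀ᵐ y ∂μ, y ∉ L → g y = 0)
    (hφ : ∀ y ∈ L, ‖φ y‖ ≤ C) : ∀ᵐ y ∂μ, ‖φ y * g y‖ ≤ C * ‖g y‖ := by
  filter_upwards [hgL] with y hy
  by_cases hyL : y ∈ L
  · rw [norm_mul]
    exact mul_le_mul_of_nonneg_right (hφ y hyL) (norm_nonneg _)
  · simp [hy hyL]

lemma norm_integral_mul_le_of_forall_mem {φ : α → ℂ} {C : ℝ} (hg : Integrable g μ)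
    (hgL : ∀ᵐ y ∂μ, y ∉ L → g y = 0) (hφ : ∀ y ∈ L, ‖φ y‖ ≤ C) :
    ‖∫ y, φ y * g y ∂μ‖ ≤ C * ∫ y, ‖g y‖ ∂μ := by
  rw [← integral_const_mul]
  exact norm_integral_le_of_norm_le (hg.norm.const_mul C) (ae_norm_mul_le_of_forall_mem hgL hφ)

lemma MeasureTheory.Integrable.bdd_mul_of_forall_mem {φ : α → ℂ} {C : ℝ}
    (hg : Integrable g μ) (hφ : AEStronglyMeasurable φ μ) (hgL : ∀ᵐ y ∂μ, y ∉ L → g y = 0)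
    (hφL : ∀ y ∈ L, ‖φ y‖ ≤ C) :
    Integrable (fun y => φ y * g y) μ :=
  (hg.norm.const_mul C).mono' (hφ.mul hg.aestronglyMeasurable)
    (ae_norm_mul_le_of_forall_mem hgL hφL)

variable [TopologicalSpace α] [OpensMeasurableSpace α] {K : X → α → ℂ}

lemma norm_kernelIntegral_sub_le (hK : ∀ x, Continuous (K x)) (hL : IsCompact L)
    (hg : Integrable g μ) (hgL : ∀ᵐ y ∂μ, y ∉ L → g y = 0) {x x' : X} {ε : ℝ}
    (hKε : ∀ y ∈ L, ‖K x y - K x' y‖ ≤ ε) :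
    ‖kernelIntegral μ K g x - kernelIntegral μ K g x'‖ ≤ ε * ∫ y, ‖g y‖ ∂μ := by
  have hint : ∀ x, Integrable (fun y => K x y * g y) μ := fun x => by
    obtain ⟨C, hC⟩ := hL.exists_bound_of_continuousOn (hK x).continuousOn
    exact hg.bdd_mul_of_forall_mem (hK x).aestronglyMeasurable hgL hC
  rw [kernelIntegral, kernelIntegral, ← integral_sub (hint x) (hint x')]
  simp_rw [← sub_mul]
  exact norm_integral_mul_le_of_forall_mem hg hgL hKε

lemma equicontinuous_kernelIntegral [TopologicalSpace X] {ι : Type*}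
    (hK : Continuous (uncurry K)) (hL : IsCompact L) {g : ι → α → ℂ}
    (hg : ∀ i, Integrable (g i) μ) (hgL : ∀ i, ∀ᵐ y ∂μ, y ∉ L → g i y = 0)
    {D : ℝ} (hD : ∀ i, ∫ y, ‖g i y‖ ∂μ ≤ D) :
    Equicontinuous fun i => kernelIntegral μ K (g i) := by
  intro x₀
  rw [Metric.equicontinuousAt_iff_right]
  intro ε hε
  have hδ : 0 < ε / (|D| + 1) := by positivity
  obtain ⟨v, hv, hvK⟩ := hL.mem_uniformity_of_prod hK.continuousOn (mem_univ x₀)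
    (Metric.dist_mem_uniformity hδ)
  rw [nhdsWithin_univ] at hv
  filter_upwards [hv] with x hx i
  rw [dist_comm, dist_eq_norm]
  calc _ ≤ ε / (|D| + 1) * ∫ y, ‖g i y‖ ∂μ :=
        norm_kernelIntegral_sub_le (fun x => hK.comp (Continuous.prodMk_right x)) hL (hg i)
          (hgL i) fun y hy => by rw [← dist_eq_norm]; exact le_of_lt (hvK x hx y hy)
    _ ≤ ε / (|D| + 1) * |D| := by gcongr; exact (hD i).trans (le_abs_self D)
    _ < ε := by
        rw [div_mul_eq_mul_div, div_lt_iff₀ (by positivity)]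
        nlinarith [abs_nonneg D]

end KernelIntegral

lemma MeasureTheory.Lp.integral_norm_le_norm {α E : Type*} [MeasurableSpace α]
    [NormedAddCommGroup E] {μ : Measure α} [IsProbabilityMeasure μ] {p : ℝ≥0∞} [Fact (1 ≤ p)]
    (f : Lp E p μ) :
    ∫ x, ‖f x‖ ∂μ ≤ ‖f‖ := by
  rw [integral_norm_eq_lintegral_enorm (Lp.aestronglyMeasurable f),
    ← eLpNorm_one_eq_lintegral_enorm, Lp.norm_def]
  exact ENNReal.toReal_mono (Lp.eLpNorm_ne_top f)
    (eLpNorm_le_eLpNorm_of_exponent_le Fact.out (Lp.aestronglyMeasurable f))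

section IccExtension

variable {E : Type*} [NormedAddCommGroup E] {μ : Measure ℝ} [IsFiniteMeasure μ] {p : ℝ≥0∞}
  {c d : ℝ} {S : Set ℝ}

lemma memLp_indicator_comp_projIcc (hcd : c ≤ d) (hS : MeasurableSet S) (h : Icc c d →ᵇ E) :
    MemLp (S.indicator (h ∘ projIcc c d hcd)) p μ :=
  .of_bound ((h.continuous.comp continuous_projIcc).aestronglyMeasurable.indicator hS) ‖h‖
    (.of_forall fun x => (norm_indicator_le_norm_self _ x).trans (h.norm_coe_le_norm _))

variable [Fact (1 ≤ p)]

def indicatorProjIccLp (μ : Measure ℝ) [IsFiniteMeasure μ] (p : ℝ≥0∞) [Fact (1 ≤ p)]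
    (hcd : c ≤ d) (hS : MeasurableSet S) (h : Icc c d →ᵇ E) : Lp E p μ :=
  (memLp_indicator_comp_projIcc hcd hS h).toLp _

lemma coeFn_indicatorProjIccLp (hcd : c ≤ d) (hS : MeasurableSet S) (h : Icc c d →ᵇ E) :
    indicatorProjIccLp μ p hcd hS h =ᵐ[μ] S.indicator (h ∘ projIcc c d hcd) :=
  MemLp.coeFn_toLp _

lemma lipschitzWith_indicatorProjIccLp (hcd : c ≤ d) (hS : MeasurableSet S) :
    LipschitzWith (measureUnivNNReal μ ^ p.toReal⁻¹)
      (indicatorProjIccLp (E := E) μ p hcd hS) := by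
  refine LipschitzWith.of_dist_le_mul fun h h' => ?_
  rw [dist_eq_norm]
  refine Lp.norm_le_of_ae_bound dist_nonneg ?_
  filter_upwards
    [Lp.coeFn_sub (indicatorProjIccLp μ p hcd hS h) (indicatorProjIccLp μ p hcd hS h'),
    coeFn_indicatorProjIccLp (p := p) hcd hS h, coeFn_indicatorProjIccLp (p := p) hcd hS h']
    with x hx hh hh'
  rw [hx, Pi.sub_apply, hh, hh', ← Pi.sub_apply, ← indicator_sub']
  exact (norm_indicator_le_norm_self _ x).trans ((dist_eq_norm _ _).symm.trans_le
    (h.dist_coe_le_dist _))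

end IccExtension

lemma indicator_inter_Icc_domRestrict_comp_projIcc {E : Type*} [Zero E] {c d : ℝ} (hcd : c ≤ d)
    (S : Set ℝ) {F : ℝ → E} (hF : ∀ x ∉ Icc c d, F x = 0) :
    (S ∩ Icc c d).indicator ((Icc c d).domRestrict F ∘ projIcc c d hcd) = S.indicator F := by
  rw [← indicator_indicator]
  congr 1
  ext x
  by_cases hx : x ∈ Icc c d
  · rw [indicator_of_mem hx, comp_apply, projIcc_of_mem hcd hx]
    rfl
  · rw [indicator_of_notMem hx, hF x hx]

theorem isCompactOperator_comp_of_kernelIntegral {μ : Measure ℝ} [IsProbabilityMeasure μ]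
    {K : ℝ → ℝ → ℂ} (hK : Continuous (uncurry K)) {L : Set ℝ} (hL : IsCompact L)
    {c d : ℝ} (hcd : c ≤ d) (hKcd : ∀ x ∉ Icc c d, ∀ y ∈ L, K x y = 0)
    {S : Set ℝ} (hS : MeasurableSet S) (R T : Lp ℂ 2 μ →L[ℂ] Lp ℂ 2 μ)
    (hR : ∀ f, ∀ᵐ y ∂μ, y ∉ L → R f y = 0)
    (hT : ∀ f, T (R f) =ᵐ[μ] S.indicator (kernelIntegral μ K (R f))) :
    IsCompactOperator (T.comp R) := by
  set ball := Metric.closedBall (0 : Lp ℂ 2 μ) 1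
  have hint : ∀ f, Integrable (R f) μ := fun f => (Lp.memLp _).integrable one_le_two
  have hL1 : ∀ f : ball, ∫ y, ‖R f y‖ ∂μ ≤ ‖R‖ := fun f =>
    (Lp.integral_norm_le_norm _).trans
      ((R.le_opNorm_of_le (mem_closedBall_zero_iff.mp f.2)).trans_eq (mul_one _))
  have hequi := equicontinuous_kernelIntegral (g := fun f : ball => R f) hK hL (fun f => hint f)
    (fun f => hR f) hL1
  have hvanish : ∀ f x, x ∉ Icc c d → kernelIntegral μ K (R f) x = 0 := fun f x hx =>
    norm_le_zero_iff.mp <| (norm_integral_mul_le_of_forall_mem (hint f)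
      (hR f) fun y hy => (norm_eq_zero.mpr (hKcd x hx y hy)).le).trans_eq (zero_mul _)
  let Φ : ball → (Icc c d →ᵇ ℂ) := fun f =>
    .mkOfCompact ⟨(Icc c d).domRestrict (kernelIntegral μ K (R f)),
      (hequi.continuous f).comp continuous_subtype_val⟩
  obtain ⟨C, hC⟩ := (isCompact_Icc.prod hL).exists_bound_of_continuousOn hK.continuousOn
  have hΦC : ∀ f x, Φ f x ∈ Metric.closedBall 0 (|C| * ‖R‖) := fun f x => by
    rw [mem_closedBall_zero_iff]
    exact (norm_integral_mul_le_of_forall_mem (hint f) (hR f)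
      fun y hy => (hC (x, y) ⟨x.2, hy⟩).trans (le_abs_self C)).trans (by gcongr; exact hL1 f)
  have hΦequi : Equicontinuous ((↑) : range Φ → Icc c d → ℂ) := by
    have := ((equicontinuous_restrict_iff _).mpr (hequi.equicontinuousOn (Icc c d))).comp
      (rangeSplitting Φ)
    convert this using 2 with h
    exact congrArg DFunLike.coe (apply_rangeSplitting Φ h).symm
  have hcpt := BoundedContinuousFunction.arzela_ascoli _ (isCompact_closedBall 0 (|C| * ‖R‖))
    (range Φ) (by rintro _ x ⟨f, rfl⟩; exact hΦC f x) hΦequi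
  have hSI : MeasurableSet (S ∩ Icc c d) := hS.inter measurableSet_Icc
  refine ⟨indicatorProjIccLp μ 2 hcd hSI '' closure (range Φ),
    hcpt.image (lipschitzWith_indicatorProjIccLp hcd hSI).continuous, ?_⟩
  filter_upwards [Metric.closedBall_mem_nhds (0 : Lp ℂ 2 μ) one_pos] with f hf
  refine ⟨Φ ⟨f, hf⟩, subset_closure (mem_range_self _), Lp.ext ?_⟩
  refine (coeFn_indicatorProjIccLp _ _ (Φ ⟨f, hf⟩)).trans ?_
  exact (EventuallyEq.of_eq (indicator_inter_Icc_domRestrict_comp_projIcc hcd S (hvanish f))).trans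
    (hT f).symm

section MetropolisHastings

variable {π : ℝ → ℝ} {q : ℝ → ℝ → ℝ}

lemma isProbabilityMeasure_piMeas (hπ : ∀ x, 0 ≤ π x) (hπ1 : ∫ x, π x = 1) :
    IsProbabilityMeasure (piMeas π) := by
  have hint : Integrable π := .of_integral_ne_zero (hπ1 ▸ one_ne_zero)
  constructor
  rw [piMeas, withDensity_apply _ MeasurableSet.univ, Measure.restrict_univ,
    ← ofReal_integral_eq_lintegral_ofReal hint (.of_forall hπ), hπ1, ENNReal.ofReal_one]

lemma kernelIntegral_piMeas_div {X : Type*} (hπ : Measurable π) (hπpos : ∀ x, 0 < π x)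
    (k : X → ℝ → ℂ) (g : ℝ → ℂ) (x : X) :
    kernelIntegral (piMeas π) (fun x y => k x y / π y) g x = ∫ y, k x y * g y := by
  rw [kernelIntegral, piMeas, integral_withDensity_eq_integral_toReal_smul
    hπ.ennreal_ofReal (.of_forall fun _ => ENNReal.ofReal_lt_top)]
  congr with y
  have hπy : (π y : ℂ) ≠ 0 := Complex.ofReal_ne_zero.mpr (hπpos y).ne'
  rw [ENNReal.toReal_ofReal (hπpos y).le, Complex.real_smul]
  field_simp

lemma mhT_eq_zero_of_lt_abs_sub {s : ℝ} (hrange : ∀ x u : ℝ, s < |u| → q x (x + u) = 0)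
    {x y : ℝ} (h : s < |y - x|) : mhT π q x y = 0 := by
  have hxy : q x y = 0 := by simpa using hrange x (y - x) h
  have hyx : q y x = 0 := by simpa using hrange y (x - y) (by rwa [abs_sub_comm])
  simp [mhT, hxy, hyx]

lemma continuous_mhT (hπ : Continuous π) (hπpos : ∀ x, 0 < π x)
    (hq : Continuous (uncurry q)) :
    Continuous (uncurry (mhT π q)) :=
  hq.min (((hπ.comp continuous_snd).mul (hq.comp continuous_swap)).div (hπ.comp continuous_fst)
    fun p => (hπpos p.1).ne')

lemma continuous_mhT_div (hπ : Continuous π) (hπpos : ∀ x, 0 < π x)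
    (hq : Continuous (uncurry q)) :
    Continuous (uncurry fun x y => (mhT π q x y : ℂ) / π y) :=
  (Complex.continuous_ofReal.comp (continuous_mhT hπ hπpos hq)).div
    (Complex.continuous_ofReal.comp (hπ.comp continuous_snd))
    fun p => Complex.ofReal_ne_zero.mpr (hπpos p.2).ne'

lemma mhT_eq_zero_of_notMem_Icc {s a : ℝ} (hrange : ∀ x u : ℝ, s < |u| → q x (x + u) = 0)
    {x y : ℝ} (hx : x ∉ Icc (-(|a| + |s|)) (|a| + |s|)) (hy : y ∈ Icc (-a) a) :
    mhT π q x y = 0 := by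
  rw [mem_Icc, ← abs_le, not_le] at hx
  have hy' := abs_le.mpr hy
  refine mhT_eq_zero_of_lt_abs_sub hrange ?_
  linarith [le_abs_self s, le_abs_self a, abs_sub_abs_le_abs_sub x y, abs_sub_comm x y]

end MetropolisHastings

theorem RacTac_pow_Ra_compact_general
    (π : ℝ → ℝ) (hπpos : ∀ x, 0 < π x) (hπcont : Continuous π)
    (hπprob : ∫ x, π x = 1)
    (q : ℝ → ℝ → ℝ)
    (hqcont : Continuous fun p : ℝ × ℝ => q p.1 p.2)
    (s : ℝ) (hrange : ∀ x u : ℝ, s < |u| → q x (x + u) = 0)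
    (a : ℝ)
    (Ra Rac Tac : Lp ℂ 2 (piMeas π) →L[ℂ] Lp ℂ 2 (piMeas π))
    (hRa : ∀ f : Lp ℂ 2 (piMeas π),
      ⇑(Ra f) =ᵐ[piMeas π] fun x => if |x| ≤ a then (mhR π q x : ℂ) * f x else 0)
    (hRac : ∀ f : Lp ℂ 2 (piMeas π),
      ⇑(Rac f) =ᵐ[piMeas π] fun x => if a < |x| then (mhR π q x : ℂ) * f x else 0)
    (hTac : ∀ f : Lp ℂ 2 (piMeas π),
      ⇑(Tac f) =ᵐ[piMeas π]
        fun x => if a < |x| then (∫ y, (mhT π q x y : ℂ) * f y) else 0)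
    (n : ℕ) (hn : 1 ≤ n) :
    IsCompactOperator ⇑(((Rac + Tac) ^ n).comp Ra) := by
  have := isProbabilityMeasure_piMeas (fun x => (hπpos x).le) hπprob
  have hRa_supp : ∀ f, ∀ᵐ y ∂piMeas π, y ∉ Icc (-a) a → Ra f y = 0 := fun f => by
    filter_upwards [hRa f] with y hy hya
    rw [hy, if_neg fun h => hya (abs_le.mp h)]
  have hTac_kernel : ∀ f, Tac (Ra f) =ᵐ[piMeas π] {x | a < |x|}.indicator
      (kernelIntegral (piMeas π) (fun x y => (mhT π q x y : ℂ) / π y) (Ra f)) := fun f => by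
    filter_upwards [hTac (Ra f)] with x hx
    simp only [hx, indicator_apply, mem_ofPred_eq,
      kernelIntegral_piMeas_div hπcont.measurable hπpos]
  have hcompact : IsCompactOperator (Tac.comp Ra) :=
    isCompactOperator_comp_of_kernelIntegral (continuous_mhT_div hπcont hπpos hqcont)
      isCompact_Icc (neg_le_self (add_nonneg (abs_nonneg a) (abs_nonneg s)))
      (fun x hx y hy => by
        rw [mhT_eq_zero_of_notMem_Icc hrange hx hy, Complex.ofReal_zero, zero_div])
      (measurableSet_lt measurable_const continuous_abs.measurable) Ra Tac hRa_supp hTac_kernel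
  have hRac_Ra : Rac.comp Ra = 0 := by
    refine ContinuousLinearMap.ext fun f => show Rac (Ra f) = 0 from Lp.ext ?_
    filter_upwards [hRac (Ra f), hRa f, Lp.coeFn_zero ℂ 2 (piMeas π)] with x hRac_x hRa_x h0
    rw [hRac_x, h0, Pi.zero_apply]
    split_ifs with hax
    · rw [hRa_x, if_neg (not_le.mpr hax), mul_zero]
    · rfl
  obtain ⟨k, rfl⟩ := Nat.exists_eq_add_of_le' hn
  rw [pow_succ, ContinuousLinearMap.mul_def, ContinuousLinearMap.comp_assoc,
    ContinuousLinearMap.add_comp, hRac_Ra, zero_add]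
  exact hcompact.clm_comp _

theorem RacTac_pow_Ra_compact
    (π : ℝ → ℝ) (hπpos : ∀ x, 0 < π x) (hπcont : Continuous π)
    (hπprob : ∫ x, π x = 1)
    (q : ℝ → ℝ → ℝ) (hqnn : ∀ x y, 0 ≤ q x y) (hqbdd : ∃ M, ∀ x y, q x y ≤ M)
    (hqcont : Continuous fun p : ℝ × ℝ => q p.1 p.2) (hqprob : ∀ x, ∫ y, q x y = 1)
    (s : ℝ) (hs : 0 < s) (hrange : ∀ x u : ℝ, s < |u| → q x (x + u) = 0)
    (a : ℝ) (ha : 0 < a)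
    (Ra Rac Tac : Lp ℂ 2 (piMeas π) →L[ℂ] Lp ℂ 2 (piMeas π))
    (hRa : ∀ f : Lp ℂ 2 (piMeas π),
      ⇑(Ra f) =ᵐ[piMeas π] fun x => if |x| ≤ a then (mhR π q x : ℂ) * f x else 0)
    (hRac : ∀ f : Lp ℂ 2 (piMeas π),
      ⇑(Rac f) =ᵐ[piMeas π] fun x => if a < |x| then (mhR π q x : ℂ) * f x else 0)
    (hTac : ∀ f : Lp ℂ 2 (piMeas π),
      ⇑(Tac f) =ᵐ[piMeas π]
        fun x => if a < |x| then (∫ y, (mhT π q x y : ℂ) * f y) else 0)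
    (n : ℕ) (hn : 1 ≤ n) :
    IsCompactOperator ⇑(((Rac + Tac) ^ n).comp Ra) :=
  RacTac_pow_Ra_compact_general π hπpos hπcont hπprob q hqcont s hrange a Ra Rac Tac hRa hRac hTac n
    hn
end
end

section
/- For every a > 0, the operator norm of T_{a^c} on L²(π) satisfies ‖T_{a^c}‖ ≤ β_a, where β_a := ∫_{−s}^{s} sup_{|x|>a} √(t(x,x+u)·t(x+u,x)) du. -/
/-!
Detailed balance `π x · t(x,y) = π y · t(y,x)` turns `t` into a symmetric kernel after
conjugating by `√π`: `√(π x) t(x, x+u) = √(t(x,x+u) t(x+u,x)) √(π (x+u)) ≤ g(u) √(π (x+u))`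
for `|x| > a`, where `g` is the integrand of `β_a`. So with `ψ = √π |f|`, the function
`√π |T_{a^c} f|` is dominated by `x ↦ ∫ g(u) ψ(x+u) du`, and Young's inequality
`‖g ⋆ ψ‖₂ ≤ ‖g‖₁ ‖ψ‖₂` (Cauchy–Schwarz with weight `g`, then Tonelli and translation
invariance) gives `‖T_{a^c} f‖_{L²(π)} ≤ β_a ‖f‖_{L²(π)}`; `β_a = ‖g‖₁` since `g` vanishes
outside `[-s, s]`.
-/

open MeasureTheory Filter Topology

noncomputable section

open scoped ENNReal

section Kernel

variable {π : ℝ → ℝ} {q : ℝ → ℝ → ℝ}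

lemma mhT_nonneg (hπ : ∀ x, 0 ≤ π x) (hq : ∀ x y, 0 ≤ q x y) (x y : ℝ) : 0 ≤ mhT π q x y :=
  le_min (hq x y) (div_nonneg (mul_nonneg (hπ y) (hq y x)) (hπ x))

lemma mhT_le (x y : ℝ) : mhT π q x y ≤ q x y := min_le_left _ _

lemma mhT_detailed_balance {x y : ℝ} (hx : 0 < π x) (hy : 0 < π y) :
    mhT π q x y * π x = mhT π q y x * π y := by
  simp only [mhT, min_mul_of_nonneg _ _ hx.le, min_mul_of_nonneg _ _ hy.le,
    div_mul_cancel₀ _ hx.ne', div_mul_cancel₀ _ hy.ne']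
  rw [min_comm, mul_comm (π x), mul_comm (π y)]

lemma sqrt_mul_mhT_eq (hπ : ∀ x, 0 < π x) (hq : ∀ x y, 0 ≤ q x y) (x y : ℝ) :
    √(π x) * mhT π q x y = √(mhT π q x y * mhT π q y x) * √(π y) := by
  have ht := mhT_nonneg (fun x => (hπ x).le) hq
  calc √(π x) * mhT π q x y = √(π x * (mhT π q x y * mhT π q x y)) := by
        rw [Real.sqrt_mul (hπ x).le, Real.sqrt_mul_self (ht x y)]
    _ = √(mhT π q x y * mhT π q y x * π y) := by
        rw [mul_assoc, ← mhT_detailed_balance (hπ x) (hπ y)]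
        ring_nf
    _ = √(mhT π q x y * mhT π q y x) * √(π y) :=
        Real.sqrt_mul (mul_nonneg (ht x y) (ht y x)) _

lemma continuous_mhT_s5 (hπ : ∀ x, 0 < π x) (hπc : Continuous π)
    (hqc : Continuous fun p : ℝ × ℝ => q p.1 p.2) :
    Continuous fun p : ℝ × ℝ => mhT π q p.1 p.2 :=
  hqc.min (((hπc.comp continuous_snd).mul (hqc.comp continuous_swap)).div
    (hπc.comp continuous_fst) fun p => (hπ p.1).ne')

end Kernel

section WeightedYoung

open ENNReal

lemma sq_lintegral_mul_le {α : Type*} [MeasurableSpace α] {μ : Measure α} {g h : α → ℝ≥0∞}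
    (hg : AEMeasurable g μ) (hh : AEMeasurable h μ) :
    (∫⁻ x, g x * h x ∂μ) ^ 2 ≤ (∫⁻ x, g x ∂μ) * ∫⁻ x, g x * h x ^ 2 ∂μ := by
  have hsqrt : ∀ x, g x ^ (2⁻¹ : ℝ) * (g x * h x ^ 2) ^ (2⁻¹ : ℝ) = g x * h x := fun x => by
    rw [← mul_rpow_of_nonneg _ _ (by norm_num), ← pow_rpow_inv_natCast two_ne_zero (g x * h x)]
    ring_nf
  have hholder := lintegral_mul_norm_pow_le (f := g) (g := fun x => g x * h x ^ 2) hg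
    (hg.mul (hh.pow_const 2)) (p := 2⁻¹) (q := 2⁻¹) (by norm_num) (by norm_num) (by norm_num)
  simp only [hsqrt] at hholder
  calc (∫⁻ x, g x * h x ∂μ) ^ 2
      ≤ ((∫⁻ x, g x ∂μ) ^ (2⁻¹ : ℝ) * (∫⁻ x, g x * h x ^ 2 ∂μ) ^ (2⁻¹ : ℝ)) ^ 2 :=
        pow_le_pow_left₀ bot_le hholder 2
    _ = (∫⁻ x, g x ∂μ) * ∫⁻ x, g x * h x ^ 2 ∂μ := by
        have hsq : ∀ z : ℝ≥0∞, (z ^ (2⁻¹ : ℝ)) ^ 2 = z := fun z => by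
          simpa using rpow_inv_natCast_pow two_ne_zero z
        rw [mul_pow, hsq, hsq]

lemma lintegral_sq_le_of_le_lintegral_mul_translate {g ψ H : ℝ → ℝ≥0∞} (hg : Measurable g)
    (hψ : Measurable ψ) (hH : ∀ x, H x ≤ ∫⁻ u, g u * ψ (x + u)) :
    ∫⁻ x, H x ^ 2 ≤ (∫⁻ u, g u) ^ 2 * ∫⁻ x, ψ x ^ 2 := by
  have hmeas : Measurable fun p : ℝ × ℝ => g p.2 * ψ (p.1 + p.2) ^ 2 :=
    (hg.comp measurable_snd).mul ((hψ.comp (measurable_fst.add measurable_snd)).pow_const 2)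
  calc ∫⁻ x, H x ^ 2 ≤ ∫⁻ x, (∫⁻ u, g u) * ∫⁻ u, g u * ψ (x + u) ^ 2 :=
        lintegral_mono fun x => (pow_le_pow_left₀ bot_le (hH x) 2).trans
          (sq_lintegral_mul_le hg.aemeasurable (hψ.comp (measurable_const_add x)).aemeasurable)
    _ = (∫⁻ u, g u) * ∫⁻ u, ∫⁻ x, g u * ψ (x + u) ^ 2 := by
        rw [lintegral_const_mul _ hmeas.lintegral_prod_right',
          lintegral_lintegral_swap hmeas.aemeasurable]
    _ = (∫⁻ u, g u) ^ 2 * ∫⁻ x, ψ x ^ 2 := by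
        have htranslate : ∀ u, ∫⁻ x, g u * ψ (x + u) ^ 2 = g u * ∫⁻ x, ψ x ^ 2 := fun u => by
          rw [lintegral_const_mul _ (by fun_prop : Measurable fun x => ψ (x + u) ^ 2),
            lintegral_add_right_eq_self (fun x => ψ x ^ 2)]
        simp_rw [htranslate]
        rw [lintegral_mul_const _ hg]
        ring

end WeightedYoung

section WeightedL2

open ENNReal

lemma sq_eLpNorm_two_piMeas {E : Type*} [NormedAddCommGroup E] {π : ℝ → ℝ} (hπ : Measurable π)
    (h : ℝ → E) :
    eLpNorm h 2 (piMeas π) ^ 2 = ∫⁻ x, (ENNReal.ofReal √(π x) * ‖h x‖ₑ) ^ 2 := by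
  have hpow := eLpNorm_nnreal_pow_eq_lintegral (f := h) (μ := piMeas π) (p := 2) two_ne_zero
  simp only [NNReal.coe_ofNat, rpow_two, ENNReal.coe_ofNat] at hpow
  rw [hpow, piMeas, lintegral_withDensity_eq_lintegral_mul_non_measurable _ hπ.ennreal_ofReal
    (ae_of_all _ fun _ => ofReal_lt_top)]
  congr 1 with x
  rw [Pi.mul_apply, mul_pow, ← ofReal_pow (Real.sqrt_nonneg _), Real.sq_sqrt', ofReal_max,
    ofReal_zero, max_zero]

lemma eLpNorm_indicator_integral_kernel_le {π : ℝ → ℝ} (hπ : Measurable π) {k : ℝ → ℝ → ℝ}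
    (hk : ∀ x y, 0 ≤ k x y) {A : Set ℝ} {g : ℝ → ℝ} (hg : Measurable g)
    (hkg : ∀ x ∈ A, ∀ u, √(π x) * k x (x + u) ≤ g u * √(π (x + u)))
    {f : ℝ → ℂ} (hf : Measurable f) :
    eLpNorm (A.indicator fun x => ∫ y, (k x y : ℂ) * f y) 2 (piMeas π)
      ≤ (∫⁻ u, ENNReal.ofReal (g u)) * eLpNorm f 2 (piMeas π) := by
  set w : ℝ → ℝ≥0∞ := fun x => ENNReal.ofReal √(π x)
  rw [← ENNReal.pow_le_pow_left_iff two_ne_zero, mul_pow, sq_eLpNorm_two_piMeas hπ,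
    sq_eLpNorm_two_piMeas hπ]
  refine lintegral_sq_le_of_le_lintegral_mul_translate hg.ennreal_ofReal
    (hπ.sqrt.ennreal_ofReal.mul hf.enorm) fun x => ?_
  by_cases hx : x ∈ A
  · have hpt : ∀ u, w x * ‖(k x (x + u) : ℂ) * f (x + u)‖ₑ
        ≤ ENNReal.ofReal (g u) * (w (x + u) * ‖f (x + u)‖ₑ) := fun u => by
      rw [enorm_mul, ← ofReal_norm, Complex.norm_real, Real.norm_of_nonneg (hk _ _), ← mul_assoc,
        ← ofReal_mul (Real.sqrt_nonneg _), ← mul_assoc, ← ofReal_mul' (Real.sqrt_nonneg _)]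
      exact mul_le_mul_left (ofReal_le_ofReal (hkg x hx u)) _
    calc w x * ‖A.indicator (fun x => ∫ y, (k x y : ℂ) * f y) x‖ₑ
        ≤ w x * ∫⁻ y, ‖(k x y : ℂ) * f y‖ₑ := by
          rw [Set.indicator_of_mem hx]
          gcongr
          exact enorm_integral_le_lintegral_enorm _
      _ = ∫⁻ u, w x * ‖(k x (x + u) : ℂ) * f (x + u)‖ₑ := by
          rw [← lintegral_const_mul' _ _ ofReal_ne_top,
            ← lintegral_add_left_eq_self (fun y => w x * ‖(k x y : ℂ) * f y‖ₑ) x]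
      _ ≤ ∫⁻ u, ENNReal.ofReal (g u) * (w (x + u) * ‖f (x + u)‖ₑ) := lintegral_mono hpt
  · simp [Set.indicator_of_notMem hx]

end WeightedL2

lemma lintegral_ofReal_eq_intervalIntegral {g : ℝ → ℝ} {a b M : ℝ} (hab : a ≤ b)
    (hg : Measurable g) (hg0 : ∀ u, 0 ≤ g u) (hgM : ∀ u, g u ≤ M)
    (hsupp : ∀ u ∉ Set.Icc a b, g u = 0) :
    ∫⁻ u, ENNReal.ofReal (g u) = ENNReal.ofReal (∫ u in a..b, g u) := by
  have hint : IntegrableOn g (Set.Icc a b) :=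
    Measure.integrableOn_of_bounded measure_Icc_lt_top.ne hg.aestronglyMeasurable
      (ae_of_all _ fun u => by rw [Real.norm_of_nonneg (hg0 u)]; exact hgM u)
  have hsupp' : (fun u => ENNReal.ofReal (g u)).support ⊆ Set.Icc a b := fun u hu => by
    by_contra h
    exact hu (by simp [hsupp u h])
  rw [intervalIntegral.integral_of_le hab, ← integral_Icc_eq_integral_Ioc,
    ofReal_integral_eq_lintegral_ofReal hint (ae_of_all _ hg0),
    setLIntegral_eq_of_support_subset hsupp']

/-- The integrand of `β_a`, for `A = {x | a < |x|}`. -/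
def symKernelSup (t : ℝ → ℝ → ℝ) (A : Set ℝ) (u : ℝ) : ℝ :=
  sSup ((fun x => √(t x (x + u) * t (x + u) x)) '' A)

section SymKernelSup

variable {t : ℝ → ℝ → ℝ} {A : Set ℝ} {M : ℝ}

lemma sqrt_mul_le_of_le (ht0 : ∀ x y, 0 ≤ t x y) (htM : ∀ x y, t x y ≤ M) (x y : ℝ) :
    √(t x y * t y x) ≤ M := by
  have hM : 0 ≤ M := (ht0 x y).trans (htM x y)
  rw [Real.sqrt_le_left hM, sq]
  exact mul_le_mul (htM x y) (htM y x) (ht0 y x) hM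

lemma symKernelSup_nonneg (u : ℝ) : 0 ≤ symKernelSup t A u :=
  Real.sSup_nonneg <| Set.forall_mem_image.2 fun _ _ => Real.sqrt_nonneg _

lemma symKernelSup_le (ht0 : ∀ x y, 0 ≤ t x y) (htM : ∀ x y, t x y ≤ M) (u : ℝ) :
    symKernelSup t A u ≤ M :=
  Real.sSup_le (Set.forall_mem_image.2 fun _ _ => sqrt_mul_le_of_le ht0 htM _ _)
    ((ht0 0 0).trans (htM 0 0))

lemma le_symKernelSup (ht0 : ∀ x y, 0 ≤ t x y) (htM : ∀ x y, t x y ≤ M) {x : ℝ} (hx : x ∈ A)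
    (u : ℝ) : √(t x (x + u) * t (x + u) x) ≤ symKernelSup t A u :=
  le_csSup ⟨M, Set.forall_mem_image.2 fun _ _ => sqrt_mul_le_of_le ht0 htM _ _⟩
    (Set.mem_image_of_mem _ hx)

lemma symKernelSup_eq_zero {u : ℝ} (h : ∀ x, t x (x + u) = 0) : symKernelSup t A u = 0 :=
  le_antisymm (Real.sSup_nonpos <| Set.forall_mem_image.2 fun x _ => by simp [h x])
    (symKernelSup_nonneg u)

lemma measurable_symKernelSup (ht0 : ∀ x y, 0 ≤ t x y) (htM : ∀ x y, t x y ≤ M)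
    (htc : Continuous fun p : ℝ × ℝ => t p.1 p.2) : Measurable (symKernelSup t A) := by
  have hlsc : LowerSemicontinuous fun u => ⨆ x : A, √(t x (x + u) * t (x + u) x) :=
    lowerSemicontinuous_ciSup
      (fun _ => ⟨M, Set.forall_mem_range.2 fun _ => sqrt_mul_le_of_le ht0 htM _ _⟩)
      fun x => (Continuous.sqrt (by fun_prop)).lowerSemicontinuous
  have hsup : symKernelSup t A = fun u => ⨆ x : A, √(t x (x + u) * t (x + u) x) :=
    funext fun _ => sSup_image'
  exact hsup ▸ hlsc.measurable

end SymKernelSup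

lemma MeasureTheory.Lp.norm_le_mul_norm_of_eLpNorm_le {α E : Type*} [MeasurableSpace α]
    {μ : Measure α} [NormedAddCommGroup E] {p : ℝ≥0∞} {f g : Lp E p μ} {c : ℝ} (hc : 0 ≤ c)
    (h : eLpNorm g p μ ≤ ENNReal.ofReal c * eLpNorm f p μ) : ‖g‖ ≤ c * ‖f‖ := by
  rw [Lp.norm_def, Lp.norm_def, ← ENNReal.toReal_ofReal hc, ← ENNReal.toReal_mul]
  exact ENNReal.toReal_mono (ENNReal.mul_ne_top ENNReal.ofReal_ne_top (Lp.eLpNorm_ne_top f)) h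

theorem Tac_norm_le_beta_general
    (π : ℝ → ℝ) (hπpos : ∀ x, 0 < π x) (hπcont : Continuous π)
    (q : ℝ → ℝ → ℝ) (hqnn : ∀ x y, 0 ≤ q x y) (hqbdd : ∃ M, ∀ x y, q x y ≤ M)
    (hqcont : Continuous fun p : ℝ × ℝ => q p.1 p.2)
    (s : ℝ) (hs : 0 < s) (hrange : ∀ x u : ℝ, s < |u| → q x (x + u) = 0)
    (a : ℝ)
    (Tac : Lp ℂ 2 (piMeas π) →L[ℂ] Lp ℂ 2 (piMeas π))
    (hTac : ∀ f : Lp ℂ 2 (piMeas π),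
      ⇑(Tac f) =ᵐ[piMeas π]
        fun x => if a < |x| then (∫ y, (mhT π q x y : ℂ) * f y) else 0) :
    ‖Tac‖ ≤ ∫ u in (-s)..s,
      sSup ((fun x => Real.sqrt (mhT π q x (x + u) * mhT π q (x + u) x)) ''
        {x | a < |x|}) := by
  obtain ⟨M, hM⟩ := hqbdd
  set A : Set ℝ := {x | a < |x|}
  set g := symKernelSup (mhT π q) A
  show ‖Tac‖ ≤ ∫ u in (-s)..s, g u
  have ht0 := mhT_nonneg (fun x => (hπpos x).le) hqnn
  have htM : ∀ x y, mhT π q x y ≤ M := fun x y => (mhT_le x y).trans (hM x y)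
  have hg : Measurable g := measurable_symKernelSup ht0 htM (continuous_mhT_s5 hπpos hπcont hqcont)
  have hβ : ∫⁻ u, ENNReal.ofReal (g u) = ENNReal.ofReal (∫ u in (-s)..s, g u) := by
    refine lintegral_ofReal_eq_intervalIntegral (by linarith) hg symKernelSup_nonneg
      (symKernelSup_le ht0 htM) fun u hu => symKernelSup_eq_zero fun x => ?_
    rw [Set.mem_Icc, ← abs_le, not_le] at hu
    exact le_antisymm ((mhT_le x (x + u)).trans_eq (hrange x u hu)) (ht0 _ _)
  have hkg : ∀ x ∈ A, ∀ u, √(π x) * mhT π q x (x + u) ≤ g u * √(π (x + u)) := fun x hx u => by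
    rw [sqrt_mul_mhT_eq hπpos hqnn]
    exact mul_le_mul_of_nonneg_right (le_symKernelSup ht0 htM hx u) (Real.sqrt_nonneg _)
  have hβ0 : 0 ≤ ∫ u in (-s)..s, g u :=
    intervalIntegral.integral_nonneg (by linarith) fun u _ => symKernelSup_nonneg u
  refine ContinuousLinearMap.opNorm_le_bound _ hβ0 fun f => Lp.norm_le_mul_norm_of_eLpNorm_le hβ0 ?_
  rw [eLpNorm_congr_ae (hTac f), ← hβ]
  convert eLpNorm_indicator_integral_kernel_le hπcont.measurable ht0 hg hkg
    (Lp.stronglyMeasurable f).measurable using 2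
  ext x
  simp [Set.indicator_apply, A]

theorem Tac_norm_le_beta
    (π : ℝ → ℝ) (hπpos : ∀ x, 0 < π x) (hπcont : Continuous π)
    (hπprob : ∫ x, π x = 1)
    (q : ℝ → ℝ → ℝ) (hqnn : ∀ x y, 0 ≤ q x y) (hqbdd : ∃ M, ∀ x y, q x y ≤ M)
    (hqcont : Continuous fun p : ℝ × ℝ => q p.1 p.2) (hqprob : ∀ x, ∫ y, q x y = 1)
    (s : ℝ) (hs : 0 < s) (hrange : ∀ x u : ℝ, s < |u| → q x (x + u) = 0)
    (a : ℝ) (ha : 0 < a)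
    (Tac : Lp ℂ 2 (piMeas π) →L[ℂ] Lp ℂ 2 (piMeas π))
    (hTac : ∀ f : Lp ℂ 2 (piMeas π),
      ⇑(Tac f) =ᵐ[piMeas π]
        fun x => if a < |x| then (∫ y, (mhT π q x y : ℂ) * f y) else 0) :
    ‖Tac‖ ≤ ∫ u in (-s)..s,
      sSup ((fun x => Real.sqrt (mhT π q x (x + u) * mhT π q (x + u) x)) ''
        {x | a < |x|}) :=
  Tac_norm_le_beta_general π hπpos hπcont q hqnn hqbdd hqcont s hs hrange a Tac hTac
end
end

section
/- Suppose q(x,y) := Δ(x−y) where Δ : ℝ → [0,∞) is an even continuous function supported on [−s,s] and positive on (−s,s) with ∫Δ = 1, π is an even positive continuous probability density on ℝ, and for every u ∈ [0,s] the limit τ(u) := lim_{x→+∞} π(x+u)/π(x) exists in [0,1]. Then the limit r_∞' := lim_{a→+∞} r_a' exists and equals 1 − ∫_0^s Δ(u)(1 + τ(u)) du, where r_a' := sup_{|x|>a} r(x); in particular r_∞' ≤ 1/2. -/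
open MeasureTheory Filter Topology

noncomputable section

lemma min_one_inv_eq {a : ℝ} (ha : 0 < a) : min 1 a⁻¹ = (max 1 a)⁻¹ := by
  rcases le_total a 1 with h | h
  · rw [min_eq_left (one_le_inv_iff₀.mpr ⟨ha, h⟩), max_eq_left h, inv_one]
  · rw [min_eq_right (inv_le_one_of_one_le₀ h), max_eq_right h]

theorem rinfty_limit
    (s : ℝ) (hs : 0 < s)
    (Δ : ℝ → ℝ) (hΔnn : ∀ u, 0 ≤ Δ u) (hΔcont : Continuous Δ)
    (hΔeven : ∀ u, Δ (-u) = Δ u)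
    (hΔsupp : ∀ u, s < |u| → Δ u = 0)
    (hΔpos : ∀ u ∈ Set.Ioo (-s) s, 0 < Δ u)
    (hΔint : ∫ u, Δ u = 1)
    (π : ℝ → ℝ) (hπpos : ∀ x, 0 < π x) (hπcont : Continuous π)
    (hπeven : ∀ x, π (-x) = π x) (hπprob : ∫ x, π x = 1)
    (τ : ℝ → ℝ)
    (hτ : ∀ u ∈ Set.Icc 0 s, Tendsto (fun x => π (x + u) / π x) atTop (𝓝 (τ u)))
    (hτmem : ∀ u ∈ Set.Icc 0 s, τ u ∈ Set.Icc (0 : ℝ) 1)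
    (r : ℝ → ℝ)
    (hr : ∀ x, r x = 1 - ∫ u in (-s)..s, Δ u * min 1 (π (x + u) / π x)) :
    Tendsto (fun a : ℝ => sSup (r '' {x | a < |x|})) atTop
      (𝓝 (1 - ∫ u in (0 : ℝ)..s, Δ u * (1 + τ u))) ∧
    1 - (∫ u in (0 : ℝ)..s, Δ u * (1 + τ u)) ≤ 1 / 2 := by
  set F : ℝ → ℝ → ℝ := fun x u => Δ u * min 1 (π (x + u) / π x) with hFdef
  set L : ℝ := 1 - ∫ u in (0 : ℝ)..s, Δ u * (1 + τ u) with hLdef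
  have hFcont : ∀ x, Continuous (F x) := fun x =>
    hΔcont.mul (continuous_const.min
      ((hπcont.comp (continuous_const.add continuous_id)).div_const (π x)))
  have hFnn : ∀ x u, 0 ≤ F x u := fun x u =>
    mul_nonneg (hΔnn u) (le_min zero_le_one (div_nonneg (hπpos _).le (hπpos x).le))
  have hFle : ∀ x u, F x u ≤ Δ u := fun x u =>
    mul_le_of_le_one_right (hΔnn u) (min_le_left _ _)
  have hFii : ∀ x a b, IntervalIntegrable (F x) volume a b := fun x a b =>
    (hFcont x).intervalIntegrable a b
  have hΔii : ∀ a b : ℝ, IntervalIntegrable Δ volume a b := fun a b =>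
    hΔcont.intervalIntegrable a b
  -- r bounds
  have hrle : ∀ x, r x ≤ 1 := by
    intro x
    rw [hr x]
    have : 0 ≤ ∫ u in (-s)..s, F x u :=
      intervalIntegral.integral_nonneg (by linarith) (fun u _ => hFnn x u)
    linarith
  -- r is even
  have hreven : ∀ x, r (-x) = r x := by
    intro x
    rw [hr, hr]
    congr 1
    have key : ∀ u : ℝ, (fun v => Δ v * min 1 (π (-x + v) / π (-x))) (-u) = F x u := by
      intro u
      simp only [hFdef]
      rw [hΔeven]
      congr 2
      have : -x + -u = -(x + u) := by ring
      rw [this, hπeven, hπeven]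
    calc ∫ u in (-s)..s, Δ u * min 1 (π (-x + u) / π (-x))
        = ∫ u in -s..(- -s), (fun v => Δ v * min 1 (π (-x + v) / π (-x))) u := by
          norm_num
      _ = ∫ u in (-s)..s, (fun v => Δ v * min 1 (π (-x + v) / π (-x))) (-u) := by
          rw [intervalIntegral.integral_comp_neg (fun v => Δ v * min 1 (π (-x + v) / π (-x)))]
      _ = ∫ u in (-s)..s, F x u := by
          exact intervalIntegral.integral_congr fun u _ => key u
  -- half-mass of Δ
  have hΔrefl : (∫ u in (-s)..(0:ℝ), Δ u) = ∫ u in (0:ℝ)..s, Δ u := by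
    have h1 : (∫ u in (-s)..(0:ℝ), Δ (-u)) = ∫ u in (-0:ℝ)..(- -s), Δ u :=
      intervalIntegral.integral_comp_neg Δ
    simp only [neg_neg, neg_zero] at h1
    rw [← h1]
    exact intervalIntegral.integral_congr fun u _ => (hΔeven u).symm
  have hΔfull : (∫ u in (-s)..s, Δ u) = 1 := by
    rw [intervalIntegral.integral_of_le (by linarith), ← integral_Icc_eq_integral_Ioc, ← hΔint]
    apply setIntegral_eq_integral_of_forall_compl_eq_zero
    intro u hu
    apply hΔsupp
    rw [Set.mem_Icc] at hu
    push_neg at hu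
    rcases lt_or_ge u (-s) with h | h
    · exact lt_abs.mpr (Or.inr (by linarith))
    · exact lt_abs.mpr (Or.inl (hu h))
  have hΔhalf : (∫ u in (0:ℝ)..s, Δ u) = 1 / 2 := by
    have := intervalIntegral.integral_add_adjacent_intervals (hΔii (-s) 0) (hΔii 0 s)
    rw [hΔfull, hΔrefl] at this
    linarith
  -- integrability of Δ * τ on [0, s]
  have hτaesm : AEStronglyMeasurable τ (volume.restrict (Set.Ioc (0:ℝ) s)) := by
    apply aestronglyMeasurable_of_tendsto_ae (atTop : Filter ℕ)
      (f := fun n u => π ((n : ℝ) + u) / π (n : ℝ))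
      (fun n => ((hπcont.comp (continuous_const.add continuous_id)).div_const _).aestronglyMeasurable)
    filter_upwards [ae_restrict_mem measurableSet_Ioc] with u hu
    exact (hτ u ⟨hu.1.le, hu.2⟩).comp tendsto_natCast_atTop_atTop
  have hΔτii : IntervalIntegrable (fun u => Δ u * τ u) volume 0 s := by
    rw [intervalIntegrable_iff_integrableOn_Ioc_of_le hs.le]
    have hΔint' : IntegrableOn Δ (Set.Ioc 0 s) volume := by
      rw [← intervalIntegrable_iff_integrableOn_Ioc_of_le hs.le]; exact hΔii 0 s
    apply hΔint'.mono' (hΔcont.aestronglyMeasurable.restrict.mul hτaesm)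
    filter_upwards [ae_restrict_mem measurableSet_Ioc] with u hu
    have hm := hτmem u ⟨hu.1.le, hu.2⟩
    show |Δ u * τ u| ≤ Δ u
    rw [abs_of_nonneg (mul_nonneg (hΔnn u) hm.1)]
    exact mul_le_of_le_one_right (hΔnn u) hm.2
  -- DCT on [0, s]
  have hT1 : Tendsto (fun x => ∫ u in (0:ℝ)..s, F x u) atTop
      (𝓝 (∫ u in (0:ℝ)..s, Δ u * τ u)) := by
    apply intervalIntegral.tendsto_integral_filter_of_dominated_convergence Δ
    · exact Eventually.of_forall fun x => (hFcont x).aestronglyMeasurable.restrict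
    · refine Eventually.of_forall fun x => ae_of_all _ fun u _ => ?_
      rw [Real.norm_eq_abs, abs_of_nonneg (hFnn x u)]; exact hFle x u
    · exact hΔii 0 s
    · refine ae_of_all _ fun u hu => ?_
      rw [Set.uIoc_of_le hs.le] at hu
      have hu' : u ∈ Set.Icc 0 s := ⟨hu.1.le, hu.2⟩
      have h1 : Tendsto (fun x => min 1 (π (x + u) / π x)) atTop (𝓝 (min 1 (τ u))) :=
        tendsto_const_nhds.min (hτ u hu')
      rw [min_eq_right (hτmem u hu').2] at h1
      exact tendsto_const_nhds.mul h1
  -- DCT on [-s, 0]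
  have hT0 : Tendsto (fun x => ∫ u in (-s)..(0:ℝ), F x u) atTop
      (𝓝 (∫ u in (-s)..(0:ℝ), Δ u)) := by
    apply intervalIntegral.tendsto_integral_filter_of_dominated_convergence Δ
    · exact Eventually.of_forall fun x => (hFcont x).aestronglyMeasurable.restrict
    · refine Eventually.of_forall fun x => ae_of_all _ fun u _ => ?_
      rw [Real.norm_eq_abs, abs_of_nonneg (hFnn x u)]; exact hFle x u
    · exact hΔii (-s) 0
    · refine ae_of_all _ fun u hu => ?_
      rw [Set.uIoc_of_le (by linarith : -s ≤ (0:ℝ))] at hu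
      have hv : -u ∈ Set.Icc 0 s := ⟨by linarith [hu.2], by linarith [hu.1]⟩
      have hratio : ∀ x : ℝ, min 1 (π (x + u) / π x) = (max 1 (π x / π (x + u)))⁻¹ := by
        intro x
        rw [← min_one_inv_eq (div_pos (hπpos x) (hπpos (x + u))), inv_div]
      have hρ : Tendsto (fun x => π x / π (x + u)) atTop (𝓝 (τ (-u))) := by
        have := (hτ (-u) hv).comp (tendsto_atTop_add_const_right atTop u tendsto_id)
        convert this using 2 with x
        simp [Function.comp]
      have hmax : Tendsto (fun x => max 1 (π x / π (x + u))) atTop (𝓝 1) := by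
        have := (tendsto_const_nhds (x := (1:ℝ)) (f := (atTop : Filter ℝ))).max hρ
        rwa [max_eq_left (hτmem (-u) hv).2] at this
      have hmin : Tendsto (fun x => min 1 (π (x + u) / π x)) atTop (𝓝 1) := by
        have := hmax.inv₀ one_ne_zero
        rw [inv_one] at this
        exact this.congr fun x => (hratio x).symm
      have := tendsto_const_nhds.mul hmin (f := fun _ : ℝ => Δ u)
      rwa [mul_one] at this
  -- convergence of r
  have hrL : Tendsto r atTop (𝓝 L) := by
    have hI : Tendsto (fun x => ∫ u in (-s)..s, F x u) atTop
        (𝓝 ((∫ u in (-s)..(0:ℝ), Δ u) + ∫ u in (0:ℝ)..s, Δ u * τ u)) := by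
      refine (hT0.add hT1).congr fun x => ?_
      exact intervalIntegral.integral_add_adjacent_intervals (hFii x (-s) 0) (hFii x 0 s)
    have hsum : (∫ u in (-s)..(0:ℝ), Δ u) + (∫ u in (0:ℝ)..s, Δ u * τ u)
        = ∫ u in (0:ℝ)..s, Δ u * (1 + τ u) := by
      rw [hΔrefl]
      rw [show (∫ u in (0:ℝ)..s, Δ u * (1 + τ u)) = ∫ u in (0:ℝ)..s, (Δ u + Δ u * τ u) from
        intervalIntegral.integral_congr fun u _ => by ring]
      rw [intervalIntegral.integral_add (hΔii 0 s) hΔτii]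
    have := (tendsto_const_nhds (x := (1:ℝ)) (f := atTop)).sub hI
    rw [hsum] at this
    exact this.congr fun x => (hr x).symm
  constructor
  · -- the sup converges
    have himg : ∀ a : ℝ, r '' {x | a < |x|} = r '' Set.Ioi a := by
      intro a
      ext y
      constructor
      · rintro ⟨x, hx, rfl⟩
        simp only [Set.mem_setOf_eq] at hx
        rcases lt_abs.mp hx with h | h
        · exact ⟨x, h, rfl⟩
        · exact ⟨-x, h, hreven x⟩
      · rintro ⟨x, hx, rfl⟩
        exact ⟨x, lt_of_lt_of_le hx (le_abs_self x), rfl⟩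
    rw [Metric.tendsto_atTop]
    intro ε hε
    obtain ⟨X, hX⟩ := Metric.tendsto_atTop.mp hrL (ε / 2) (by positivity)
    refine ⟨X, fun a ha => ?_⟩
    rw [himg a]
    have hmem : r (a + 1) ∈ r '' Set.Ioi a := ⟨a + 1, by simp, rfl⟩
    have hbdd : BddAbove (r '' Set.Ioi a) := ⟨1, by rintro y ⟨x, _, rfl⟩; exact hrle x⟩
    have hub : sSup (r '' Set.Ioi a) ≤ L + ε / 2 := by
      apply csSup_le ⟨_, hmem⟩
      rintro y ⟨x, hx, rfl⟩
      have h := hX x (le_of_lt (lt_of_le_of_lt ha hx))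
      rw [Real.dist_eq] at h
      have := (abs_lt.mp h).2
      linarith
    have hlb : L - ε / 2 < sSup (r '' Set.Ioi a) := by
      have h := hX (a + 1) (by linarith)
      rw [Real.dist_eq] at h
      have h1 := (abs_lt.mp h).1
      have h2 := le_csSup hbdd hmem
      linarith
    rw [Real.dist_eq, abs_lt]
    constructor <;> linarith
  · -- the bound ≤ 1/2
    have hnn : 0 ≤ ∫ u in (0:ℝ)..s, Δ u * τ u :=
      intervalIntegral.integral_nonneg hs.le fun u hu =>
        mul_nonneg (hΔnn u) (hτmem u hu).1
    have hsplit : (∫ u in (0:ℝ)..s, Δ u * (1 + τ u))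
        = (∫ u in (0:ℝ)..s, Δ u) + ∫ u in (0:ℝ)..s, Δ u * τ u := by
      rw [show (∫ u in (0:ℝ)..s, Δ u * (1 + τ u)) = ∫ u in (0:ℝ)..s, (Δ u + Δ u * τ u) from
        intervalIntegral.integral_congr fun u _ => by ring]
      rw [intervalIntegral.integral_add (hΔii 0 s) hΔτii]
    rw [hLdef, hsplit, hΔhalf]
    linarith
end
end

section
/- Suppose q(x,y) := Δ(x−y) where Δ : ℝ → [0,∞) is an even continuous function supported on [−s,s] and positive on (−s,s) with ∫Δ = 1, π is an even positive continuous probability density on ℝ, and for every u ∈ [0,s] the limit τ(u) := lim_{x→+∞} π(x+u)/π(x) exists in [0,1]. Then the limit β_∞ := lim_{a→+∞} β_a exists and equals 2 ∫_0^s Δ(u) τ(u)^{1/2} du, where β_a := ∫_{−s}^{s} sup_{|x|>a} √(t(x,x+u)·t(x+u,x)) du. -/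
/-!
Writing `r = π (x + u) / π x`, the Metropolis–Hastings kernel gives
`√(t(x, x+u) t(x+u, x)) = Δ u · √(min r r⁻¹)`. As `x → +∞` this tends to `Δ u · √τ(u)` for
`u ∈ [0, s]`, and since `π` is even the reflection `x ↦ -x - u` (which swaps `r` and `r⁻¹`)
gives the same limit as `x → -∞`; hence the supremum over `|x| > a` converges to it as `a → ∞`.
The integrand is even in `u`, lower semicontinuous (a supremum of continuous functions) and
dominated by `Δ`, so dominated convergence on `[0, s]` gives the limit.
-/

open MeasureTheory Filter Topology

noncomputable section

lemma tendsto_min_inv {α : Type*} {l : Filter α} {r : α → ℝ} {t : ℝ}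
    (hr : ∀ᶠ x in l, 0 ≤ r x) (h : Tendsto r l (𝓝 t)) (ht : t ∈ Set.Icc 0 1) :
    Tendsto (fun x => min (r x) (r x)⁻¹) l (𝓝 t) := by
  rcases ht.1.eq_or_lt with rfl | ht0
  · exact squeeze_zero' (hr.mono fun x hx => le_min hx (inv_nonneg.2 hx))
      (Eventually.of_forall fun x => min_le_left _ _) h
  · simpa [min_eq_left (ht.2.trans (one_le_inv₀ ht0 |>.2 ht.2))] using h.min (h.inv₀ ht0.ne')

lemma integral_neg_self_of_even {f : ℝ → ℝ} (hf : ∀ x, f (-x) = f x) {s : ℝ}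
    (hint : IntervalIntegrable f volume 0 s) :
    ∫ x in -s..s, f x = 2 * ∫ x in 0..s, f x := by
  have hneg : IntervalIntegrable f volume (-s) 0 := by
    simpa [hf] using ((IntervalIntegrable.iff_comp_neg (by finiteness)).1 hint).symm
  have hhalf : ∫ x in -s..0, f x = ∫ x in 0..s, f x := by
    simpa [hf] using (intervalIntegral.integral_comp_neg (a := 0) (b := s) f).symm
  rw [← intervalIntegral.integral_add_adjacent_intervals hneg hint, hhalf]
  ring

def tailSup (f : ℝ → ℝ) (a : ℝ) : ℝ := sSup (f '' {x | a < |x|})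

lemma tendsto_tailSup {f : ℝ → ℝ} {L : ℝ} (hf : Tendsto f (atBot ⊔ atTop) (𝓝 L)) :
    Tendsto (tailSup f) atTop (𝓝 L) := by
  rw [← comap_abs_atTop] at hf
  refine Metric.nhds_basis_closedBall.tendsto_right_iff.2 fun ε hε => ?_
  obtain ⟨A, -, hA⟩ := (atTop_basis_Ioi.comap _).eventually_iff.1
    (hf.eventually (Metric.closedBall_mem_nhds L hε))
  filter_upwards [eventually_ge_atTop A] with a ha
  have hsub : f '' {x | a < |x|} ⊆ Metric.closedBall L ε := by
    rintro _ ⟨x, hx, rfl⟩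
    exact hA (ha.trans_lt hx)
  have hmem : a < |(|a| + 1)| := by
    rw [abs_of_pos (by positivity)]; linarith [le_abs_self a]
  exact Metric.isClosed_closedBall.closure_subset_iff.2 hsub
    (csSup_mem_closure ⟨_, _, hmem, rfl⟩ (Metric.isBounded_closedBall.subset hsub).bddAbove)

lemma tailSup_comp_neg (f : ℝ → ℝ) (a : ℝ) : tailSup (fun x => f (-x)) a = tailSup f a := by
  have hS : Neg.neg '' {x : ℝ | a < |x|} = {x | a < |x|} := by
    ext x; simp
  rw [tailSup, ← Set.image_image f Neg.neg, hS, tailSup]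

lemma lowerSemicontinuous_tailSup {α : Type*} [TopologicalSpace α] {F : α → ℝ → ℝ}
    (hF : ∀ x, Continuous (F · x)) (hbdd : ∀ u, BddAbove (Set.range (F u))) (a : ℝ) :
    LowerSemicontinuous fun u => tailSup (F u) a := by
  simp only [tailSup, sSup_image']
  exact lowerSemicontinuous_ciSup (fun u => (hbdd u).mono (Set.range_comp_subset_range _ _))
    fun x => (hF x).lowerSemicontinuous

lemma min_one_mul_min_one_inv {r : ℝ} (hr : 0 < r) : min 1 r * min 1 r⁻¹ = min r r⁻¹ := by
  rcases le_total r 1 with h | h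
  · have h' : 1 ≤ r⁻¹ := (one_le_inv₀ hr).2 h
    rw [min_eq_right h, min_eq_left h', min_eq_left (h.trans h'), mul_one]
  · have h' : r⁻¹ ≤ 1 := inv_le_one_of_one_le₀ h
    rw [min_eq_left h, min_eq_right h', min_eq_right (h'.trans h), one_mul]

section RatioMin

variable {Δ π : ℝ → ℝ}

def ratioMin (π : ℝ → ℝ) (u x : ℝ) : ℝ := min (π (x + u) / π x) (π (x + u) / π x)⁻¹

lemma mhT_apply_add (hΔnn : ∀ u, 0 ≤ Δ u) (hΔeven : ∀ u, Δ (-u) = Δ u) (x u : ℝ) :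
    mhT π (fun x y => Δ (x - y)) x (x + u) = Δ u * min 1 (π (x + u) / π x) := by
  rw [mhT, show x - (x + u) = -u by ring, add_sub_cancel_left, hΔeven, mul_comm (π _),
    mul_div_assoc, mul_min_of_nonneg _ _ (hΔnn u), mul_one]

lemma sqrt_mhT_mul_mhT (hΔnn : ∀ u, 0 ≤ Δ u) (hΔeven : ∀ u, Δ (-u) = Δ u)
    (hπpos : ∀ x, 0 < π x) (x u : ℝ) :
    √(mhT π (fun x y => Δ (x - y)) x (x + u) * mhT π (fun x y => Δ (x - y)) (x + u) x) =
      Δ u * √(ratioMin π u x) := by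
  have hback := mhT_apply_add (π := π) hΔnn hΔeven (x + u) (-u)
  rw [add_neg_cancel_right, hΔeven, ← inv_div] at hback
  rw [mhT_apply_add hΔnn hΔeven, hback, mul_mul_mul_comm,
    min_one_mul_min_one_inv (div_pos (hπpos _) (hπpos _)), ← sq, Real.sqrt_mul (sq_nonneg _),
    Real.sqrt_sq (hΔnn u), ratioMin]

lemma ratioMin_le_one (u x : ℝ) : ratioMin π u x ≤ 1 := by
  rcases le_total (π (x + u) / π x) 1 with h | h
  · exact (min_le_left _ _).trans h
  · exact (min_le_right _ _).trans (inv_le_one_of_one_le₀ h)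

lemma continuous_ratioMin (hπcont : Continuous π) (hπpos : ∀ x, 0 < π x) (x : ℝ) :
    Continuous fun u => ratioMin π u x := by
  have hr : Continuous fun u => π (x + u) / π x := by fun_prop
  exact hr.min (hr.inv₀ fun u => (div_pos (hπpos _) (hπpos _)).ne')

lemma ratioMin_neg (hπeven : ∀ x, π (-x) = π x) (u x : ℝ) :
    ratioMin π (-u) x = ratioMin π u (-x) := by
  rw [ratioMin, ratioMin, ← hπeven (x + -u), ← hπeven x, neg_add', sub_neg_eq_add]

lemma ratioMin_neg_sub (hπeven : ∀ x, π (-x) = π x) (u x : ℝ) :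
    ratioMin π u (-x - u) = ratioMin π u x := by
  rw [ratioMin, ratioMin, sub_add_cancel, ← neg_add', hπeven, hπeven, ← inv_div, inv_inv, min_comm]

lemma tendsto_ratioMin (hπpos : ∀ x, 0 < π x) (hπeven : ∀ x, π (-x) = π x) {u t : ℝ}
    (hlim : Tendsto (fun x => π (x + u) / π x) atTop (𝓝 t)) (ht : t ∈ Set.Icc 0 1) :
    Tendsto (ratioMin π u) (atBot ⊔ atTop) (𝓝 t) := by
  have htop : Tendsto (ratioMin π u) atTop (𝓝 t) :=
    tendsto_min_inv (Eventually.of_forall fun x => (div_pos (hπpos _) (hπpos _)).le) hlim ht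
  refine Tendsto.sup ?_ htop
  have hrefl : Tendsto (fun x : ℝ => -x - u) atBot atTop :=
    tendsto_atTop_add_const_right _ _ tendsto_neg_atBot_atTop
  simpa only [Function.comp_def, ratioMin_neg_sub hπeven] using htop.comp hrefl

end RatioMin

section BetaIntegrand

variable {Δ π : ℝ → ℝ}

/-- `β_a = ∫ u in -s..s, betaIntegrand Δ π a u`, by `sqrt_mhT_mul_mhT`. -/
def betaIntegrand (Δ π : ℝ → ℝ) (a u : ℝ) : ℝ := tailSup (fun x => Δ u * √(ratioMin π u x)) a

lemma betaIntegrand_neg (hΔeven : ∀ u, Δ (-u) = Δ u) (hπeven : ∀ x, π (-x) = π x) (a u : ℝ) :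
    betaIntegrand Δ π a (-u) = betaIntegrand Δ π a u := by
  simp only [betaIntegrand, hΔeven, ratioMin_neg hπeven]
  exact tailSup_comp_neg (fun x => Δ u * √(ratioMin π u x)) a

lemma mul_sqrt_ratioMin_le (hΔnn : ∀ u, 0 ≤ Δ u) (u x : ℝ) : Δ u * √(ratioMin π u x) ≤ Δ u :=
  mul_le_of_le_one_right (hΔnn u) (Real.sqrt_le_one.2 (ratioMin_le_one u x))

lemma norm_betaIntegrand_le (hΔnn : ∀ u, 0 ≤ Δ u) (a u : ℝ) : ‖betaIntegrand Δ π a u‖ ≤ Δ u := by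
  have hnonneg : 0 ≤ betaIntegrand Δ π a u :=
    Real.sSup_nonneg <| by rintro _ ⟨x, -, rfl⟩; exact mul_nonneg (hΔnn u) (Real.sqrt_nonneg _)
  rw [Real.norm_of_nonneg hnonneg]
  exact Real.sSup_le (by rintro _ ⟨x, -, rfl⟩; exact mul_sqrt_ratioMin_le hΔnn u x) (hΔnn u)

lemma measurable_betaIntegrand (hΔnn : ∀ u, 0 ≤ Δ u) (hΔcont : Continuous Δ)
    (hπcont : Continuous π) (hπpos : ∀ x, 0 < π x) (a : ℝ) :
    Measurable (betaIntegrand Δ π a) :=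
  (lowerSemicontinuous_tailSup
    (fun x => hΔcont.mul (continuous_ratioMin hπcont hπpos x).sqrt)
    (fun u => ⟨Δ u, by rintro _ ⟨x, rfl⟩; exact mul_sqrt_ratioMin_le hΔnn u x⟩) a).measurable

lemma tendsto_betaIntegrand (hπpos : ∀ x, 0 < π x) (hπeven : ∀ x, π (-x) = π x) {u t : ℝ}
    (hlim : Tendsto (fun x => π (x + u) / π x) atTop (𝓝 t)) (ht : t ∈ Set.Icc 0 1) :
    Tendsto (fun a => betaIntegrand Δ π a u) atTop (𝓝 (Δ u * √t)) :=
  tendsto_tailSup (((tendsto_ratioMin hπpos hπeven hlim ht).sqrt).const_mul (Δ u))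

end BetaIntegrand

theorem betainfty_limit_general
    (s : ℝ) (hs : 0 < s)
    (Δ : ℝ → ℝ) (hΔnn : ∀ u, 0 ≤ Δ u) (hΔcont : Continuous Δ)
    (hΔeven : ∀ u, Δ (-u) = Δ u)
    (π : ℝ → ℝ) (hπpos : ∀ x, 0 < π x) (hπcont : Continuous π)
    (hπeven : ∀ x, π (-x) = π x)
    (τ : ℝ → ℝ)
    (hτ : ∀ u ∈ Set.Icc 0 s, Tendsto (fun x => π (x + u) / π x) atTop (𝓝 (τ u)))
    (hτmem : ∀ u ∈ Set.Icc 0 s, τ u ∈ Set.Icc (0 : ℝ) 1) :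
    Tendsto
      (fun a : ℝ => ∫ u in (-s)..s,
        sSup ((fun x => Real.sqrt (mhT π (fun x y => Δ (x - y)) x (x + u) *
            mhT π (fun x y => Δ (x - y)) (x + u) x)) '' {x | a < |x|}))
      atTop
      (𝓝 (2 * ∫ u in (0 : ℝ)..s, Δ u * Real.sqrt (τ u))) := by
  have hmeas := measurable_betaIntegrand hΔnn hΔcont hπcont hπpos
  have hbound := norm_betaIntegrand_le (π := π) hΔnn
  have hint (a : ℝ) : IntervalIntegrable (betaIntegrand Δ π a) volume 0 s :=
    (hΔcont.intervalIntegrable 0 s).mono_fun' (hmeas a).aestronglyMeasurable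
      (Eventually.of_forall (hbound a))
  simp_rw [sqrt_mhT_mul_mhT hΔnn hΔeven hπpos]
  change Tendsto (fun a => ∫ u in -s..s, betaIntegrand Δ π a u) atTop _
  simp_rw [integral_neg_self_of_even (betaIntegrand_neg hΔeven hπeven _) (hint _)]
  refine (intervalIntegral.tendsto_integral_filter_of_dominated_convergence Δ
    (Eventually.of_forall fun a => (hmeas a).aestronglyMeasurable)
    (Eventually.of_forall fun a => Eventually.of_forall fun u _ => hbound a u)
    (hΔcont.intervalIntegrable 0 s) (Eventually.of_forall fun u hu => ?_)).const_mul 2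
  rw [Set.uIoc_of_le hs.le] at hu
  exact tendsto_betaIntegrand hπpos hπeven (hτ u (Set.Ioc_subset_Icc_self hu))
    (hτmem u (Set.Ioc_subset_Icc_self hu))

theorem betainfty_limit
    (s : ℝ) (hs : 0 < s)
    (Δ : ℝ → ℝ) (hΔnn : ∀ u, 0 ≤ Δ u) (hΔcont : Continuous Δ)
    (hΔeven : ∀ u, Δ (-u) = Δ u)
    (hΔsupp : ∀ u, s < |u| → Δ u = 0)
    (hΔpos : ∀ u ∈ Set.Ioo (-s) s, 0 < Δ u)
    (hΔint : ∫ u, Δ u = 1)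
    (π : ℝ → ℝ) (hπpos : ∀ x, 0 < π x) (hπcont : Continuous π)
    (hπeven : ∀ x, π (-x) = π x) (hπprob : ∫ x, π x = 1)
    (τ : ℝ → ℝ)
    (hτ : ∀ u ∈ Set.Icc 0 s, Tendsto (fun x => π (x + u) / π x) atTop (𝓝 (τ u)))
    (hτmem : ∀ u ∈ Set.Icc 0 s, τ u ∈ Set.Icc (0 : ℝ) 1) :
    Tendsto
      (fun a : ℝ => ∫ u in (-s)..s,
        sSup ((fun x => Real.sqrt (mhT π (fun x y => Δ (x - y)) x (x + u) *
            mhT π (fun x y => Δ (x - y)) (x + u) x)) '' {x | a < |x|}))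
      atTop
      (𝓝 (2 * ∫ u in (0 : ℝ)..s, Δ u * Real.sqrt (τ u))) :=
  betainfty_limit_general s hs Δ hΔnn hΔcont hΔeven π hπpos hπcont hπeven τ hτ hτmem

end
end

section
/- Let π(x) = e^{−|x|}/2 be the Laplace density and Δ(u) := (1−|u|)·1_{[−1,1]}(u), with proposal density q(x,y) := Δ(x−y). Then the rejection probability satisfies sup_{x∈ℝ} r(x) ≤ 1 − 1/e. -/
/-
Since |x| - |x + u| ≥ -|u|, the Laplace acceptance ratio π(x + u)/π(x) = e^{|x| - |x + u|} is at
least e^{-1} for every jump |u| ≤ 1. Hence the acceptance probability is at least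
e^{-1} ∫ Δ = e^{-1}, uniformly in x.
-/

open intervalIntegral

theorem integral_one_sub_abs : ∫ u in (-1 : ℝ)..1, (1 - |u|) = 1 := by
  have hc : Continuous fun u : ℝ => 1 - |u| := by fun_prop
  have hneg : ∫ u in (-1 : ℝ)..0, (1 - |u|) = ∫ u in (-1 : ℝ)..0, (1 + u) := by
    refine integral_congr fun u hu => ?_
    rw [Set.uIcc_of_le (by norm_num)] at hu
    simp only [abs_of_nonpos hu.2, sub_neg_eq_add]
  have hpos : ∫ u in (0 : ℝ)..1, (1 - |u|) = ∫ u in (0 : ℝ)..1, (1 - u) := by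
    refine integral_congr fun u hu => ?_
    rw [Set.uIcc_of_le (by norm_num)] at hu
    simp only [abs_of_nonneg hu.1]
  rw [← integral_add_adjacent_intervals (b := 0) (hc.intervalIntegrable _ _)
    (hc.intervalIntegrable _ _), hneg, hpos,
    integral_add intervalIntegrable_const intervalIntegrable_id,
    integral_sub intervalIntegrable_const intervalIntegrable_id]
  simp only [intervalIntegral.integral_const, integral_id, smul_eq_mul]
  norm_num

theorem integral_ite_abs_le_one_sub_abs_mul (f : ℝ → ℝ) :
    ∫ u in (-1 : ℝ)..1, (if |u| ≤ 1 then 1 - |u| else 0) * f u =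
      ∫ u in (-1 : ℝ)..1, (1 - |u|) * f u := by
  refine integral_congr fun u hu => ?_
  rw [Set.uIcc_of_le (by norm_num)] at hu
  simp only [abs_le.2 hu, if_true]

theorem le_integral_one_sub_abs_mul_min {a : ℝ → ℝ} {c : ℝ} (ha : Continuous a) (hc : c ≤ 1)
    (hca : ∀ u ∈ Set.Icc (-1 : ℝ) 1, c ≤ a u) :
    c ≤ ∫ u in (-1 : ℝ)..1, (1 - |u|) * min 1 (a u) := by
  calc c = ∫ u in (-1 : ℝ)..1, (1 - |u|) * c := by
        rw [intervalIntegral.integral_mul_const, integral_one_sub_abs, one_mul]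
    _ ≤ ∫ u in (-1 : ℝ)..1, (1 - |u|) * min 1 (a u) := by
        refine integral_mono_on (by norm_num) (Continuous.intervalIntegrable (by fun_prop) _ _)
          (Continuous.intervalIntegrable (by fun_prop) _ _) fun u hu => ?_
        have hweight : 0 ≤ 1 - |u| := sub_nonneg.2 (abs_le.2 hu)
        exact mul_le_mul_of_nonneg_left (le_min hc (hca u hu)) hweight

theorem exp_neg_abs_le_laplace_ratio (x u : ℝ) :
    Real.exp (-|u|) ≤ Real.exp (-|x + u|) / 2 / (Real.exp (-|x|) / 2) := by
  rw [div_div_div_cancel_right₀ two_ne_zero, ← Real.exp_sub, Real.exp_le_exp]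
  linarith [abs_add_le x u]

theorem laplace_rejection_bound
    (π : ℝ → ℝ) (hπ : π = fun x => Real.exp (-|x|) / 2)
    (Δ : ℝ → ℝ) (hΔ : Δ = fun u => if |u| ≤ 1 then 1 - |u| else 0)
    (r : ℝ → ℝ)
    (hr : ∀ x, r x = 1 - ∫ u in (-1 : ℝ)..1, Δ u * min 1 (π (x + u) / π x)) :
    sSup (Set.range r) ≤ 1 - 1 / Real.exp 1 := by
  subst hπ hΔ
  refine csSup_le (Set.range_nonempty r) ?_
  rintro _ ⟨x, rfl⟩
  have hacceptance : Real.exp (-1) ≤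
      ∫ u in (-1 : ℝ)..1, (1 - |u|) * min 1 (Real.exp (-|x + u|) / 2 / (Real.exp (-|x|) / 2)) := by
    refine le_integral_one_sub_abs_mul_min (by fun_prop) (by simp) fun u hu => ?_
    refine le_trans ?_ (exp_neg_abs_le_laplace_ratio x u)
    exact Real.exp_le_exp.2 (neg_le_neg (abs_le.2 hu))
  simp only [hr]
  rw [integral_ite_abs_le_one_sub_abs_mul, one_div, ← Real.exp_neg]
  linarith
end
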